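/- arXiv:2307.15662 — 2 statements merged into one kernel-verified Lean document; each statement's English description precedes it below -/
import Mathlib

section
/- Consider the perturbed closed-loop system ẋ = f̂(x) + û(x) + e(t), where f̂ : ℝ^d → ℝ^d is any map, û is the Sontag feedback (with a(y) = ⟨∇V(y), f̂(y)⟩, ρ(y) = ρ₀·√(a(y)² + ‖∇V(y)‖⁴), ρ₀ > 0, û(y) = −(a(y) + ρ(y))·∇V(y)/‖∇V(y)‖² if ∇V(y) ≠ 0 and a(y) + ρ(y) > 0, else û(y) = 0), and e : [0,∞) → ℝ^d is a disturbance with ‖e(t)‖² ≤ κ for all t, κ > 0. Let λ > 0 satisfy ⟨x, P₀ x⟩ ≥ λ‖x‖² for all x. Then every differentiable solution x : [0,∞) → ℝ^d with x′(t) = f̂(x(t)) + û(x(t)) + e(t) for all t ≥ 0 satisfies V(x(t)) ≤ max( V(x(0)), 2κ/(λ ρ₀²) ) for all t ≥ 0; in particular all closed-loop trajectories are globally bounded. -/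
/-!
Along a solution, `d/dt V(x) = ⟪∇V(x), f̂(x) + û(x) + e⟫`. The Sontag feedback gives
`⟪∇V, f̂ + û⟫ ≤ -ρ₀ ‖∇V‖²`, Young's inequality gives `⟪∇V, e⟫ ≤ ρ₀/2 ‖∇V‖² + κ/(2ρ₀)`, and
`‖∇V(x)‖² ≥ 4λ V(x)` because `2 V(x) ≤ ⟪∇V(x), x⟫` and `λ‖x‖² ≤ V(x)`. Hence `V(x(t))` is strictly
decreasing whenever it is at least `2κ/(λρ₀²)`, so it can never rise above
`max (V(x(0))) (2κ/(λρ₀²))`.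
-/

open scoped RealInnerProductSpace BigOperators

/-- Action of a `d × d` real matrix on `ℝ^d` (Euclidean space). -/
noncomputable def mApp {d : ℕ} (P : Matrix (Fin d) (Fin d) ℝ)
    (x : EuclideanSpace ℝ (Fin d)) : EuclideanSpace ℝ (Fin d) :=
  Matrix.toEuclideanLin P x

/-- `σ(x) = ⟨x, P(x − μ)⟩`. -/
noncomputable def sig {d : ℕ} (P : Matrix (Fin d) (Fin d) ℝ)
    (μ x : EuclideanSpace ℝ (Fin d)) : ℝ :=
  ⟪x, mApp P (x - μ)⟫

/-- Candidate control Lyapunov function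
`V(x) = ⟨x, P₀ x⟩ + Σ_{l=1}^{L} max(σ_l(x), 0)²`. -/
noncomputable def V {d L : ℕ} (P₀ : Matrix (Fin d) (Fin d) ℝ)
    (P : Fin L → Matrix (Fin d) (Fin d) ℝ) (μ : Fin L → EuclideanSpace ℝ (Fin d))
    (x : EuclideanSpace ℝ (Fin d)) : ℝ :=
  ⟪x, mApp P₀ x⟫ + ∑ l, max (sig (P l) (μ l) x) 0 ^ 2

/-- The gradient formula
`∇V(x) = 2 P₀ x + 2 Σ_{l=1}^{L} max(σ_l(x), 0) · P_l (2x − μ_l)`. -/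
noncomputable def gradV {d L : ℕ} (P₀ : Matrix (Fin d) (Fin d) ℝ)
    (P : Fin L → Matrix (Fin d) (Fin d) ℝ) (μ : Fin L → EuclideanSpace ℝ (Fin d))
    (x : EuclideanSpace ℝ (Fin d)) : EuclideanSpace ℝ (Fin d) :=
  (2 : ℝ) • mApp P₀ x +
    (2 : ℝ) • ∑ l, max (sig (P l) (μ l) x) 0 • mApp (P l) ((2 : ℝ) • x - μ l)

/-- `a(y) = ⟨∇V(y), f̂(y)⟩`. -/
noncomputable def aFun {d L : ℕ} (P₀ : Matrix (Fin d) (Fin d) ℝ)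
    (P : Fin L → Matrix (Fin d) (Fin d) ℝ) (μ : Fin L → EuclideanSpace ℝ (Fin d))
    (fhat : EuclideanSpace ℝ (Fin d) → EuclideanSpace ℝ (Fin d))
    (y : EuclideanSpace ℝ (Fin d)) : ℝ :=
  ⟪gradV P₀ P μ y, fhat y⟫

/-- `ρ(y) = ρ₀·√(a(y)² + ‖∇V(y)‖⁴)`. -/
noncomputable def rhoFun {d L : ℕ} (P₀ : Matrix (Fin d) (Fin d) ℝ)
    (P : Fin L → Matrix (Fin d) (Fin d) ℝ) (μ : Fin L → EuclideanSpace ℝ (Fin d))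
    (fhat : EuclideanSpace ℝ (Fin d) → EuclideanSpace ℝ (Fin d)) (ρ₀ : ℝ)
    (y : EuclideanSpace ℝ (Fin d)) : ℝ :=
  ρ₀ * Real.sqrt (aFun P₀ P μ fhat y ^ 2 + ‖gradV P₀ P μ y‖ ^ 4)

open Classical in
/-- The Sontag feedback: `û(y) = −(a(y) + ρ(y))·∇V(y)/‖∇V(y)‖²` if `∇V(y) ≠ 0` and
`a(y) + ρ(y) > 0`, and `û(y) = 0` otherwise. -/
noncomputable def uhat {d L : ℕ} (P₀ : Matrix (Fin d) (Fin d) ℝ)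
    (P : Fin L → Matrix (Fin d) (Fin d) ℝ) (μ : Fin L → EuclideanSpace ℝ (Fin d))
    (fhat : EuclideanSpace ℝ (Fin d) → EuclideanSpace ℝ (Fin d)) (ρ₀ : ℝ)
    (y : EuclideanSpace ℝ (Fin d)) : EuclideanSpace ℝ (Fin d) :=
  if gradV P₀ P μ y ≠ 0 ∧ 0 < aFun P₀ P μ fhat y + rhoFun P₀ P μ fhat ρ₀ y then
    (-((aFun P₀ P μ fhat y + rhoFun P₀ P μ fhat ρ₀ y) / ‖gradV P₀ P μ y‖ ^ 2)) •
      gradV P₀ P μ y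
  else 0

lemma le_max_of_deriv_neg_above {f f' : ℝ → ℝ} {a M : ℝ}
    (hf : ∀ t, a ≤ t → HasDerivAt f (f' t) t) (hneg : ∀ t, a ≤ t → M ≤ f t → f' t < 0)
    {t : ℝ} (ht : a ≤ t) : f t ≤ max (f a) M :=
  image_le_of_deriv_right_lt_deriv_boundary (B := fun _ => max (f a) M) (B' := fun _ => 0)
    (fun s hs => (hf s hs.1).continuousAt.continuousWithinAt)
    (fun s hs => (hf s hs.1).hasDerivWithinAt) (le_max_left _ _) (fun _ => hasDerivAt_const _ _)
    (fun s hs hfs => hneg s hs.1 (hfs ▸ le_max_right _ _)) ⟨ht, le_rfl⟩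

section Lyapunov

variable {d L : ℕ}

lemma inner_mApp_comm {P : Matrix (Fin d) (Fin d) ℝ} (hP : P.IsHermitian)
    (u v : EuclideanSpace ℝ (Fin d)) : ⟪mApp P u, v⟫ = ⟪u, mApp P v⟫ :=
  Matrix.isSymmetric_toEuclideanLin_iff.mpr hP u v

lemma inner_mApp_self_nonneg {P : Matrix (Fin d) (Fin d) ℝ} (hP : P.PosSemidef)
    (y : EuclideanSpace ℝ (Fin d)) : 0 ≤ ⟪y, mApp P y⟫ :=
  (Matrix.isPositive_toEuclideanLin_iff.mpr hP).inner_nonneg_right y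

lemma mApp_two_smul_sub (P : Matrix (Fin d) (Fin d) ℝ) (y μ : EuclideanSpace ℝ (Fin d)) :
    mApp P ((2 : ℝ) • y - μ) = mApp P y + mApp P (y - μ) := by
  simp only [mApp, ← map_add]
  congr 1
  module

lemma HasDerivAt.mApp (P : Matrix (Fin d) (Fin d) ℝ) {x : ℝ → EuclideanSpace ℝ (Fin d)}
    {v : EuclideanSpace ℝ (Fin d)} {t : ℝ} (hx : HasDerivAt x v t) :
    HasDerivAt (fun s => mApp P (x s)) (mApp P v) t :=
  (Matrix.toEuclideanLin P).toContinuousLinearMap.hasFDerivAt.comp_hasDerivAt t hx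

lemma hasDerivAt_max_zero_sq (r : ℝ) :
    HasDerivAt (fun s : ℝ => max s 0 ^ 2) (2 * max r 0) r := by
  rcases lt_trichotomy r 0 with hr | rfl | hr
  · have hzero : (fun s : ℝ => max s 0 ^ 2) =ᶠ[nhds r] fun _ => 0 := by
      filter_upwards [Iio_mem_nhds hr] with s (hs : s < 0)
      simp [hs.le]
    simpa [max_eq_right hr.le] using (hasDerivAt_const r (0 : ℝ)).congr_of_eventuallyEq hzero
  · rw [hasDerivAt_iff_isLittleO_nhds_zero]
    have hbound : (fun h : ℝ => max h 0 ^ 2) =O[nhds 0] fun h => h ^ 2 :=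
      Asymptotics.IsBigO.of_bound 1 <| Filter.Eventually.of_forall fun h => by
        rcases le_total h 0 with hh | hh <;> simp [hh, sq_nonneg]
    simpa using hbound.trans_isLittleO (Asymptotics.isLittleO_pow_id one_lt_two)
  · have hsq : (fun s : ℝ => max s 0 ^ 2) =ᶠ[nhds r] fun s => s ^ 2 := by
      filter_upwards [Ioi_mem_nhds hr] with s (hs : 0 < s)
      simp [hs.le]
    simpa [max_eq_left hr.le, mul_comm] using (hasDerivAt_pow 2 r).congr_of_eventuallyEq hsq

lemma inner_gradV (P₀ : Matrix (Fin d) (Fin d) ℝ) (P : Fin L → Matrix (Fin d) (Fin d) ℝ)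
    (μ : Fin L → EuclideanSpace ℝ (Fin d)) (y w : EuclideanSpace ℝ (Fin d)) :
    ⟪gradV P₀ P μ y, w⟫ = 2 * ⟪mApp P₀ y, w⟫ +
      ∑ l, 2 * max (sig (P l) (μ l) y) 0 * ⟪mApp (P l) ((2 : ℝ) • y - μ l), w⟫ := by
  simp only [gradV, inner_add_left, real_inner_smul_left, sum_inner, Finset.mul_sum]
  ring_nf

lemma hasDerivAt_sig_comp {P : Matrix (Fin d) (Fin d) ℝ} (hP : P.IsHermitian)
    (μ : EuclideanSpace ℝ (Fin d)) {x : ℝ → EuclideanSpace ℝ (Fin d)}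
    {v : EuclideanSpace ℝ (Fin d)} {t : ℝ} (hx : HasDerivAt x v t) :
    HasDerivAt (fun s => sig P μ (x s)) ⟪mApp P ((2 : ℝ) • x t - μ), v⟫ t := by
  refine (hx.inner ℝ ((hx.sub_const μ).mApp P)).congr_deriv ?_
  rw [mApp_two_smul_sub, inner_add_left, inner_mApp_comm hP, real_inner_comm v]

lemma hasDerivAt_V_comp {P₀ : Matrix (Fin d) (Fin d) ℝ} {P : Fin L → Matrix (Fin d) (Fin d) ℝ}
    (μ : Fin L → EuclideanSpace ℝ (Fin d)) (hP₀ : P₀.IsHermitian) (hP : ∀ l, (P l).IsHermitian)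
    {x : ℝ → EuclideanSpace ℝ (Fin d)} {v : EuclideanSpace ℝ (Fin d)} {t : ℝ}
    (hx : HasDerivAt x v t) :
    HasDerivAt (fun s => V P₀ P μ (x s)) ⟪gradV P₀ P μ (x t), v⟫ t := by
  have hquad : HasDerivAt (fun s => ⟪x s, mApp P₀ (x s)⟫) ⟪mApp P₀ ((2 : ℝ) • x t), v⟫ t := by
    simpa only [sig, sub_zero] using hasDerivAt_sig_comp hP₀ 0 hx
  have hpen := HasDerivAt.fun_sum (u := Finset.univ) fun l _ =>
    (hasDerivAt_max_zero_sq _).comp t (hasDerivAt_sig_comp (hP l) (μ l) hx)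
  refine (hquad.add hpen).congr_deriv ?_
  rw [inner_gradV, mApp, map_smul, real_inner_smul_left]
  rfl

lemma lam_mul_norm_sq_le_V (P₀ : Matrix (Fin d) (Fin d) ℝ) (P : Fin L → Matrix (Fin d) (Fin d) ℝ)
    (μ : Fin L → EuclideanSpace ℝ (Fin d)) {lam : ℝ}
    (hlb : ∀ x : EuclideanSpace ℝ (Fin d), lam * ‖x‖ ^ 2 ≤ ⟪x, mApp P₀ x⟫)
    (y : EuclideanSpace ℝ (Fin d)) : lam * ‖y‖ ^ 2 ≤ V P₀ P μ y :=
  (hlb y).trans (le_add_of_nonneg_right (Finset.sum_nonneg fun _ _ => sq_nonneg _))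

lemma sig_le_inner_mApp_two_smul_sub {P : Matrix (Fin d) (Fin d) ℝ} (hP : P.PosSemidef)
    (μ y : EuclideanSpace ℝ (Fin d)) : sig P μ y ≤ ⟪mApp P ((2 : ℝ) • y - μ), y⟫ := by
  have hq := inner_mApp_self_nonneg hP y
  rw [mApp_two_smul_sub, inner_add_left, real_inner_comm y (mApp P y),
    real_inner_comm y (mApp P (y - μ))]
  unfold sig
  linarith

lemma two_mul_V_le_inner_gradV_self (P₀ : Matrix (Fin d) (Fin d) ℝ)
    {P : Fin L → Matrix (Fin d) (Fin d) ℝ} (μ : Fin L → EuclideanSpace ℝ (Fin d))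
    (hP : ∀ l, (P l).PosSemidef) (y : EuclideanSpace ℝ (Fin d)) :
    2 * V P₀ P μ y ≤ ⟪gradV P₀ P μ y, y⟫ := by
  rw [inner_gradV, V, mul_add, Finset.mul_sum, real_inner_comm (mApp P₀ y)]
  gcongr 2 * _ + ∑ l, ?_ with l
  have hσ := sig_le_inner_mApp_two_smul_sub (hP l) (μ l) y
  rcases le_total (sig (P l) (μ l) y) 0 with hneg | hpos
  · simp [hneg]
  · rw [max_eq_left hpos]
    nlinarith

lemma four_mul_lam_mul_V_le_norm_gradV_sq (P₀ : Matrix (Fin d) (Fin d) ℝ)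
    {P : Fin L → Matrix (Fin d) (Fin d) ℝ} (μ : Fin L → EuclideanSpace ℝ (Fin d))
    (hP : ∀ l, (P l).PosSemidef) {lam : ℝ} (hlam : 0 ≤ lam)
    (hlb : ∀ x : EuclideanSpace ℝ (Fin d), lam * ‖x‖ ^ 2 ≤ ⟪x, mApp P₀ x⟫)
    (y : EuclideanSpace ℝ (Fin d)) :
    4 * lam * V P₀ P μ y ≤ ‖gradV P₀ P μ y‖ ^ 2 := by
  have h2V := two_mul_V_le_inner_gradV_self P₀ μ hP y
  have hV := lam_mul_norm_sq_le_V P₀ P μ hlb y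
  have hcs := real_inner_le_norm (gradV P₀ P μ y) y
  nlinarith [sq_nonneg (‖gradV P₀ P μ y‖ - 2 * lam * ‖y‖),
    mul_le_mul_of_nonneg_left (h2V.trans hcs) hlam]

lemma inner_gradV_add_uhat_le (P₀ : Matrix (Fin d) (Fin d) ℝ)
    (P : Fin L → Matrix (Fin d) (Fin d) ℝ) (μ : Fin L → EuclideanSpace ℝ (Fin d))
    (fhat : EuclideanSpace ℝ (Fin d) → EuclideanSpace ℝ (Fin d)) {ρ₀ : ℝ} (hρ₀ : 0 ≤ ρ₀)
    (y : EuclideanSpace ℝ (Fin d)) :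
    ⟪gradV P₀ P μ y, fhat y + uhat P₀ P μ fhat ρ₀ y⟫ ≤ -(ρ₀ * ‖gradV P₀ P μ y‖ ^ 2) := by
  have hρ : ρ₀ * ‖gradV P₀ P μ y‖ ^ 2 ≤ rhoFun P₀ P μ fhat ρ₀ y := by
    unfold rhoFun
    gcongr
    exact Real.le_sqrt_of_sq_le (by nlinarith [sq_nonneg (aFun P₀ P μ fhat y)])
  have ha : ⟪gradV P₀ P μ y, fhat y⟫ = aFun P₀ P μ fhat y := rfl
  rw [inner_add_right, ha, uhat]
  split_ifs with h
  · have hg : ‖gradV P₀ P μ y‖ ^ 2 ≠ 0 := by simpa using h.1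
    rw [inner_smul_right, real_inner_self_eq_norm_sq, neg_mul, div_mul_cancel₀ _ hg]
    linarith
  · push Not at h
    by_cases hg : gradV P₀ P μ y = 0
    · simp [aFun, hg]
    · rw [inner_zero_right]
      linarith [h hg]

lemma inner_gradV_closedLoop_le (P₀ : Matrix (Fin d) (Fin d) ℝ)
    {P : Fin L → Matrix (Fin d) (Fin d) ℝ} (μ : Fin L → EuclideanSpace ℝ (Fin d))
    (fhat : EuclideanSpace ℝ (Fin d) → EuclideanSpace ℝ (Fin d)) (hP : ∀ l, (P l).PosSemidef)
    {ρ₀ : ℝ} (hρ₀ : 0 < ρ₀) {lam : ℝ} (hlam : 0 ≤ lam)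
    (hlb : ∀ x : EuclideanSpace ℝ (Fin d), lam * ‖x‖ ^ 2 ≤ ⟪x, mApp P₀ x⟫)
    (y w : EuclideanSpace ℝ (Fin d)) :
    ⟪gradV P₀ P μ y, fhat y + uhat P₀ P μ fhat ρ₀ y + w⟫ ≤
      -(2 * lam * ρ₀) * V P₀ P μ y + ‖w‖ ^ 2 / (2 * ρ₀) := by
  set g := gradV P₀ P μ y
  have hsontag := inner_gradV_add_uhat_le P₀ P μ fhat hρ₀.le y
  have hV := four_mul_lam_mul_V_le_norm_gradV_sq P₀ μ hP hlam hlb y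
  have hyoung : ⟪g, w⟫ ≤ ρ₀ / 2 * ‖g‖ ^ 2 + ‖w‖ ^ 2 / (2 * ρ₀) := by
    have hc : ‖w‖ ^ 2 / (2 * ρ₀) * (2 * ρ₀) = ‖w‖ ^ 2 := div_mul_cancel₀ _ (by positivity)
    nlinarith [sq_nonneg (ρ₀ * ‖g‖ - ‖w‖), real_inner_le_norm g w]
  rw [inner_add_right]
  nlinarith [mul_le_mul_of_nonneg_left hV (by positivity : 0 ≤ ρ₀ / 2)]

end Lyapunov

/-- for the perturbed closed-loop system `ẋ = f̂(x) + û(x) + e(t)` with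
the Sontag feedback `û` (ρ₀ > 0) and a disturbance `e` with `‖e(t)‖² ≤ κ`, `κ > 0`,
if `λ > 0` satisfies `⟨x, P₀ x⟩ ≥ λ‖x‖²` for all `x`, then every differentiable
solution `x : [0,∞) → ℝ^d` satisfies `V(x(t)) ≤ max(V(x(0)), 2κ/(λ ρ₀²))` for all
`t ≥ 0`; in particular all closed-loop trajectories are globally bounded. -/
theorem stmt_15 {d L : ℕ} (P₀ : Matrix (Fin d) (Fin d) ℝ)
    (P : Fin L → Matrix (Fin d) (Fin d) ℝ) (μ : Fin L → EuclideanSpace ℝ (Fin d))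
    (hP₀ : P₀.PosDef) (hP : ∀ l, (P l).PosDef)
    (fhat : EuclideanSpace ℝ (Fin d) → EuclideanSpace ℝ (Fin d))
    (ρ₀ : ℝ) (hρ₀ : 0 < ρ₀) (κ : ℝ) (hκ : 0 < κ)
    (lam : ℝ) (hlam : 0 < lam)
    (hlb : ∀ x : EuclideanSpace ℝ (Fin d), lam * ‖x‖ ^ 2 ≤ ⟪x, mApp P₀ x⟫)
    (e : ℝ → EuclideanSpace ℝ (Fin d)) (he : ∀ t : ℝ, 0 ≤ t → ‖e t‖ ^ 2 ≤ κ)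
    (x : ℝ → EuclideanSpace ℝ (Fin d))
    (hx : ∀ t : ℝ, 0 ≤ t →
      HasDerivAt x (fhat (x t) + uhat P₀ P μ fhat ρ₀ (x t) + e t) t) :
    ∀ t : ℝ, 0 ≤ t →
      V P₀ P μ (x t) ≤ max (V P₀ P μ (x 0)) (2 * κ / (lam * ρ₀ ^ 2)) := by
  intro t ht
  refine le_max_of_deriv_neg_above
    (fun s hs => hasDerivAt_V_comp μ hP₀.isHermitian (fun l => (hP l).isHermitian) (hx s hs))
    (fun s hs hM => ?_) ht
  have hM' : 2 * κ ≤ lam * ρ₀ ^ 2 * V P₀ P μ (x s) := (div_le_iff₀' (by positivity)).mp hM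
  calc _ ≤ -(2 * lam * ρ₀) * V P₀ P μ (x s) + ‖e s‖ ^ 2 / (2 * ρ₀) :=
        inner_gradV_closedLoop_le P₀ μ fhat (fun l => (hP l).posSemidef) hρ₀ hlam.le hlb _ _
    _ ≤ -(2 * lam * ρ₀) * V P₀ P μ (x s) + κ / (2 * ρ₀) := by gcongr; exact he s hs
    _ < 0 := by
      rw [neg_mul, neg_add_lt_iff_lt_add, add_zero, div_lt_iff₀ (by positivity)]
      nlinarith
end

section
/- Let f̂ : ℝ^d → ℝ^d be any map, ρ₀ > 0, κ > 0, a(y) = ⟨∇V(y), f̂(y)⟩ and ρ(y) = ρ₀·√(a(y)² + ‖∇V(y)‖⁴). If λ > 0 satisfies ⟨x, P₀ x⟩ ≥ λ‖x‖² for all x, then the residual set Ω = { y ∈ ℝ^d : ρ(y) ≤ 2κ/ρ₀ } is contained in the compact sublevel set { y ∈ ℝ^d : V(y) ≤ 2κ/(λ ρ₀²) }. -/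
/-!
Pairing `∇V(y)` with `y` gives `2 V(y) ≤ ⟪∇V(y), y⟫ ≤ ‖∇V(y)‖ ‖y‖`, and `V(y) ≥ λ ‖y‖²`;
together these force `4 λ V(y) ≤ ‖∇V(y)‖²`. Since `ρ(y) ≥ ρ₀ ‖∇V(y)‖²`, on the residual set
`‖∇V(y)‖² ≤ 2κ/ρ₀²`, which bounds `V(y)`. The sublevel sets of the continuous, quadratically
coercive `V` are closed and bounded, hence compact.
-/

open scoped RealInnerProductSpace BigOperators

lemma inner_mApp_self_nonneg_s17 {d : ℕ} {Q : Matrix (Fin d) (Fin d) ℝ} (hQ : Q.PosSemidef)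
    (x : EuclideanSpace ℝ (Fin d)) : 0 ≤ ⟪x, mApp Q x⟫ :=
  (Matrix.isPositive_toEuclideanLin_iff.mpr hQ).inner_nonneg_right x

@[fun_prop]
lemma continuous_mApp {d : ℕ} (Q : Matrix (Fin d) (Fin d) ℝ) : Continuous (mApp Q) :=
  LinearMap.continuous_of_finiteDimensional _

lemma inner_mApp_two_smul_sub {d : ℕ} (Q : Matrix (Fin d) (Fin d) ℝ)
    (μ y : EuclideanSpace ℝ (Fin d)) :
    ⟪y, mApp Q ((2 : ℝ) • y - μ)⟫ = sig Q μ y + ⟪y, mApp Q y⟫ := by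
  rw [sig, ← inner_add_right, mApp, mApp, mApp, ← map_add, two_smul, add_sub_right_comm]

lemma four_mul_le_sq_norm_of_two_mul_le_inner {E : Type*} [NormedAddCommGroup E]
    [InnerProductSpace ℝ E] {lam v : ℝ} {g y : E} (hlam : 0 ≤ lam) (hv : lam * ‖y‖ ^ 2 ≤ v)
    (hg : 2 * v ≤ ⟪g, y⟫) : 4 * lam * v ≤ ‖g‖ ^ 2 := by
  have hcs : 2 * v ≤ ‖g‖ * ‖y‖ := hg.trans (real_inner_le_norm g y)
  nlinarith [sq_nonneg (2 * lam * ‖y‖ - ‖g‖), mul_le_mul_of_nonneg_left hcs hlam]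

lemma isCompact_setOf_le_of_mul_sq_norm_le {E : Type*} [NormedAddCommGroup E] [ProperSpace E]
    {f : E → ℝ} (hf : Continuous f) {lam : ℝ} (hlam : 0 < lam)
    (hlb : ∀ x, lam * ‖x‖ ^ 2 ≤ f x) (c : ℝ) : IsCompact {x | f x ≤ c} := by
  refine (isCompact_closedBall 0 √(c / lam)).of_isClosed_subset
    (isClosed_le hf continuous_const) fun x hx ↦ ?_
  rw [mem_closedBall_zero_iff]
  refine Real.le_sqrt_of_sq_le ((le_div_iff₀ hlam).mpr ?_)
  linarith [hlb x, show f x ≤ c from hx]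

section Lyapunov

variable {d L : ℕ} (P₀ : Matrix (Fin d) (Fin d) ℝ) (P : Fin L → Matrix (Fin d) (Fin d) ℝ)
  (μ : Fin L → EuclideanSpace ℝ (Fin d))

lemma continuous_V : Continuous (V P₀ P μ) := by
  unfold V sig
  fun_prop

lemma mul_sq_norm_le_V {lam : ℝ}
    (hlb : ∀ x : EuclideanSpace ℝ (Fin d), lam * ‖x‖ ^ 2 ≤ ⟪x, mApp P₀ x⟫)
    (y : EuclideanSpace ℝ (Fin d)) : lam * ‖y‖ ^ 2 ≤ V P₀ P μ y :=
  (hlb y).trans (le_add_of_nonneg_right (Finset.sum_nonneg fun _ _ ↦ sq_nonneg _))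

lemma inner_gradV_self (y : EuclideanSpace ℝ (Fin d)) :
    ⟪gradV P₀ P μ y, y⟫ = 2 * ⟪y, mApp P₀ y⟫ +
      2 * ∑ l, max (sig (P l) (μ l) y) 0 * ⟪y, mApp (P l) ((2 : ℝ) • y - μ l)⟫ := by
  rw [real_inner_comm, gradV]
  simp only [inner_add_right, real_inner_smul_right, inner_sum]

lemma two_mul_V_le_inner_gradV (hP : ∀ l, (P l).PosSemidef) (y : EuclideanSpace ℝ (Fin d)) :
    2 * V P₀ P μ y ≤ ⟪gradV P₀ P μ y, y⟫ := by
  -- the quadratic part of `V` is 2-homogeneous; each penalty term is dominated since `P_l ≥ 0`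
  have hterm : ∀ l, max (sig (P l) (μ l) y) 0 ^ 2 ≤
      max (sig (P l) (μ l) y) 0 * ⟪y, mApp (P l) ((2 : ℝ) • y - μ l)⟫ := by
    intro l
    have hPy := inner_mApp_self_nonneg_s17 (hP l) y
    rw [inner_mApp_two_smul_sub]
    rcases le_total (sig (P l) (μ l) y) 0 with h | h
    · simp [max_eq_right h]
    · rw [max_eq_left h]; nlinarith
  rw [inner_gradV_self, V]
  linarith [Finset.sum_le_sum fun l (_ : l ∈ Finset.univ) ↦ hterm l]

lemma mul_sq_norm_gradV_le_rhoFun {ρ₀ : ℝ} (hρ₀ : 0 ≤ ρ₀)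
    (fhat : EuclideanSpace ℝ (Fin d) → EuclideanSpace ℝ (Fin d)) (y : EuclideanSpace ℝ (Fin d)) :
    ρ₀ * ‖gradV P₀ P μ y‖ ^ 2 ≤ rhoFun P₀ P μ fhat ρ₀ y := by
  refine mul_le_mul_of_nonneg_left (Real.le_sqrt_of_sq_le ?_) hρ₀
  nlinarith [sq_nonneg (aFun P₀ P μ fhat y)]

end Lyapunov

theorem stmt_17_general {d L : ℕ} (P₀ : Matrix (Fin d) (Fin d) ℝ)
    (P : Fin L → Matrix (Fin d) (Fin d) ℝ) (μ : Fin L → EuclideanSpace ℝ (Fin d))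
    (hP : ∀ l, (P l).PosDef)
    (fhat : EuclideanSpace ℝ (Fin d) → EuclideanSpace ℝ (Fin d))
    (ρ₀ : ℝ) (hρ₀ : 0 < ρ₀) (κ : ℝ)
    (lam : ℝ) (hlam : 0 < lam)
    (hlb : ∀ x : EuclideanSpace ℝ (Fin d), lam * ‖x‖ ^ 2 ≤ ⟪x, mApp P₀ x⟫) :
    {y : EuclideanSpace ℝ (Fin d) | rhoFun P₀ P μ fhat ρ₀ y ≤ 2 * κ / ρ₀} ⊆
        {y : EuclideanSpace ℝ (Fin d) | V P₀ P μ y ≤ 2 * κ / (lam * ρ₀ ^ 2)} ∧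
      IsCompact {y : EuclideanSpace ℝ (Fin d) | V P₀ P μ y ≤ 2 * κ / (lam * ρ₀ ^ 2)} := by
  have hVlb := mul_sq_norm_le_V P₀ P μ hlb
  refine ⟨fun y hy ↦ ?_,
    isCompact_setOf_le_of_mul_sq_norm_le (continuous_V P₀ P μ) hlam hVlb _⟩
  have hVg : 4 * lam * V P₀ P μ y ≤ ‖gradV P₀ P μ y‖ ^ 2 :=
    four_mul_le_sq_norm_of_two_mul_le_inner hlam.le (hVlb y)
      (two_mul_V_le_inner_gradV P₀ P μ (fun l ↦ (hP l).posSemidef) y)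
  have hgκ : ρ₀ * ‖gradV P₀ P μ y‖ ^ 2 * ρ₀ ≤ 2 * κ :=
    (le_div_iff₀ hρ₀).mp ((mul_sq_norm_gradV_le_rhoFun P₀ P μ hρ₀.le fhat y).trans hy)
  rw [Set.mem_ofPred_eq, le_div_iff₀ (by positivity)]
  nlinarith [mul_le_mul_of_nonneg_right hVg (sq_nonneg ρ₀), hVlb y, sq_nonneg ‖y‖]

/-- with `a(y) = ⟨∇V(y), f̂(y)⟩` and `ρ(y) = ρ₀·√(a(y)² + ‖∇V(y)‖⁴)`,
`ρ₀ > 0`, `κ > 0`, if `λ > 0` satisfies `⟨x, P₀ x⟩ ≥ λ‖x‖²` for all `x`, then the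
residual set `Ω = {y : ρ(y) ≤ 2κ/ρ₀}` is contained in the compact sublevel set
`{y : V(y) ≤ 2κ/(λ ρ₀²)}`. -/
theorem stmt_17 {d L : ℕ} (P₀ : Matrix (Fin d) (Fin d) ℝ)
    (P : Fin L → Matrix (Fin d) (Fin d) ℝ) (μ : Fin L → EuclideanSpace ℝ (Fin d))
    (hP₀ : P₀.PosDef) (hP : ∀ l, (P l).PosDef)
    (fhat : EuclideanSpace ℝ (Fin d) → EuclideanSpace ℝ (Fin d))
    (ρ₀ : ℝ) (hρ₀ : 0 < ρ₀) (κ : ℝ) (hκ : 0 < κ)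
    (lam : ℝ) (hlam : 0 < lam)
    (hlb : ∀ x : EuclideanSpace ℝ (Fin d), lam * ‖x‖ ^ 2 ≤ ⟪x, mApp P₀ x⟫) :
    {y : EuclideanSpace ℝ (Fin d) | rhoFun P₀ P μ fhat ρ₀ y ≤ 2 * κ / ρ₀} ⊆
        {y : EuclideanSpace ℝ (Fin d) | V P₀ P μ y ≤ 2 * κ / (lam * ρ₀ ^ 2)} ∧
      IsCompact {y : EuclideanSpace ℝ (Fin d) | V P₀ P μ y ≤ 2 * κ / (lam * ρ₀ ^ 2)} :=
  stmt_17_general P₀ P μ hP fhat ρ₀ hρ₀ κ lam hlam hlb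
end
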